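/- Let G be a finite connected multigraph with sink s, and let R_G be the set of recurrent sandpile configurations, i.e., configurations η for which there exists ζ : V → ℕ with η = (η_max + ζ)°, where η_max(v) = deg(v) − 1. Then the operation η ⊕ ζ = (η + ζ)° makes R_G into a commutative monoid, and in fact an abelian group. -/

import Mathlib

/-!
Stabilization is well defined on sandpiles by the abelian property (the first vertex of one legal
stabilizing sequence must also occur in any other and can be toppled first there), and it
satisfies `(η° + ζ)° = (η + ζ)°`. Hence the stable sandpiles form a finite commutative monoid
under `⊕` with identity `0`. The recurrent configurations are its ideal `η_max ⊕ M`, and every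
stable `η` divides `η_max = η ⊕ (η_max - η)`. An idempotent of this ideal, which exists by
finiteness, is then an identity for it, and divisibility of `η_max` gives inverses.
-/

open Finset

variable {V : Type}

/-- Toppling the vertex `v`: it loses `deg v` chips and each neighbour `u`
gains `a u v` chips (one per connecting edge). The sink is `none : Option V`. -/
def topple (a : Option V → Option V → ℕ) (deg : Option V → ℕ)
    [DecidableEq V] (η : V → ℤ) (v : V) : V → ℤ :=
  fun u => η u - (if u = v then (deg (some v) : ℤ) else 0) + (a (some u) (some v) : ℤ)

/-- Applying a sequence of topplings. -/
def toppleSeq (a : Option V → Option V → ℕ) (deg : Option V → ℕ)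
    [DecidableEq V] (η : V → ℤ) (l : List V) : V → ℤ :=
  l.foldl (topple a deg) η

/-- A sequence of topplings is legal if each toppled vertex is unstable at the
moment it is toppled. -/
def LegalSeq (a : Option V → Option V → ℕ) (deg : Option V → ℕ)
    [DecidableEq V] : (V → ℤ) → List V → Prop
  | _, [] => True
  | η, v :: l => (deg (some v) : ℤ) ≤ η v ∧ LegalSeq a deg (topple a deg η v) l

/-- A configuration is stable if every non-sink vertex has fewer chips than
its degree. -/
def StableConfig (deg : Option V → ℕ) (η : V → ℤ) : Prop :=
  ∀ v : V, η v < (deg (some v) : ℤ)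

/-- A sandpile has a nonnegative number of chips on every vertex. -/
def IsSandpile (η : V → ℤ) : Prop := ∀ v : V, 0 ≤ η v

section Toppling

variable [DecidableEq V] (a : Option V → Option V → ℕ) (deg : Option V → ℕ)

theorem topple_comm (η : V → ℤ) (u w : V) :
    topple a deg (topple a deg η u) w = topple a deg (topple a deg η w) u := by
  funext x; simp only [topple]; ring

theorem topple_add (η ζ : V → ℤ) (v : V) :
    topple a deg (η + ζ) v = topple a deg η v + ζ := by
  funext x; simp only [topple, Pi.add_apply]; ring

theorem le_topple {x v : V} (η : V → ℤ) (hx : x ≠ v) : η x ≤ topple a deg η v x := by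
  simp only [topple, if_neg hx, sub_zero, le_add_iff_nonneg_right]
  positivity

theorem topple_mono {η η' : V → ℤ} (h : η ≤ η') (v : V) :
    topple a deg η v ≤ topple a deg η' v := fun x => by
  simp only [topple]
  linarith [h x]

theorem toppleSeq_cons (η : V → ℤ) (v : V) (l : List V) :
    toppleSeq a deg η (v :: l) = toppleSeq a deg (topple a deg η v) l := rfl

theorem toppleSeq_append (η : V → ℤ) (l₁ l₂ : List V) :
    toppleSeq a deg η (l₁ ++ l₂) = toppleSeq a deg (toppleSeq a deg η l₁) l₂ :=
  List.foldl_append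

theorem toppleSeq_topple (η : V → ℤ) (v : V) (l : List V) :
    toppleSeq a deg (topple a deg η v) l = topple a deg (toppleSeq a deg η l) v := by
  induction l generalizing η with
  | nil => rfl
  | cons u l ih => rw [toppleSeq_cons, toppleSeq_cons, topple_comm, ih]

theorem toppleSeq_append_cons (η : V → ℤ) (v : V) (p q : List V) :
    toppleSeq a deg η (p ++ v :: q) = toppleSeq a deg (topple a deg η v) (p ++ q) := by
  rw [toppleSeq_append, toppleSeq_cons, ← toppleSeq_topple, ← toppleSeq_append]

theorem toppleSeq_add (η ζ : V → ℤ) (l : List V) :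
    toppleSeq a deg (η + ζ) l = toppleSeq a deg η l + ζ := by
  induction l generalizing η with
  | nil => rfl
  | cons v l ih => rw [toppleSeq_cons, topple_add, ih, toppleSeq_cons]

theorem le_toppleSeq_of_not_mem {v : V} {l : List V} (η : V → ℤ) (hv : v ∉ l) :
    η v ≤ toppleSeq a deg η l v := by
  induction l generalizing η with
  | nil => exact le_rfl
  | cons u l ih =>
    rw [List.mem_cons, not_or] at hv
    exact (le_topple a deg η hv.1).trans (ih _ hv.2)

theorem mem_of_stableConfig_toppleSeq {η : V → ℤ} {l : List V} {v : V}
    (hs : StableConfig deg (toppleSeq a deg η l)) (hv : (deg (some v) : ℤ) ≤ η v) : v ∈ l := by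
  by_contra h
  exact (hs v).not_ge (hv.trans (le_toppleSeq_of_not_mem a deg η h))

theorem LegalSeq.mono {η η' : V → ℤ} {l : List V} (h : η ≤ η') (hl : LegalSeq a deg η l) :
    LegalSeq a deg η' l := by
  induction l generalizing η η' with
  | nil => trivial
  | cons v l ih => exact ⟨hl.1.trans (h v), ih (topple_mono a deg h v) hl.2⟩

theorem LegalSeq.append {η : V → ℤ} {l₁ l₂ : List V} (h₁ : LegalSeq a deg η l₁)
    (h₂ : LegalSeq a deg (toppleSeq a deg η l₁) l₂) : LegalSeq a deg η (l₁ ++ l₂) := by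
  induction l₁ generalizing η with
  | nil => exact h₂
  | cons v l ih => exact ⟨h₁.1, ih h₁.2 h₂⟩

theorem LegalSeq.topple_of_append_cons {η : V → ℤ} {v : V} {p q : List V} (hvp : v ∉ p)
    (hv : (deg (some v) : ℤ) ≤ η v) (hl : LegalSeq a deg η (p ++ v :: q)) :
    LegalSeq a deg (topple a deg η v) (p ++ q) := by
  induction p generalizing η with
  | nil => exact hl.2
  | cons u p ih =>
    rw [List.mem_cons, not_or] at hvp
    refine ⟨hl.1.trans (le_topple a deg η (Ne.symm hvp.1)), ?_⟩
    rw [topple_comm]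
    exact ih hvp.2 (hv.trans (le_topple a deg η hvp.1)) hl.2

theorem toppleSeq_eq_of_legalSeq_of_stableConfig {η : V → ℤ} {l₁ l₂ : List V}
    (hl₁ : LegalSeq a deg η l₁) (hs₁ : StableConfig deg (toppleSeq a deg η l₁))
    (hl₂ : LegalSeq a deg η l₂) (hs₂ : StableConfig deg (toppleSeq a deg η l₂)) :
    toppleSeq a deg η l₁ = toppleSeq a deg η l₂ := by
  induction l₁ generalizing η l₂ with
  | nil =>
    cases l₂ with
    | nil => rfl
    | cons v _ => exact absurd hl₂.1 (hs₁ v).not_ge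
  | cons v l₁ ih =>
    obtain ⟨p, q, rfl, hvp⟩ :=
      List.eq_append_cons_of_mem (mem_of_stableConfig_toppleSeq a deg hs₂ hl₁.1)
    rw [toppleSeq_cons] at hs₁ ⊢
    rw [toppleSeq_append_cons] at hs₂ ⊢
    exact ih hl₁.2 hs₁ (hl₂.topple_of_append_cons a deg hvp hl₁.1) hs₂

end Toppling

theorem IsSandpile.add {η ζ : V → ℤ} (hη : IsSandpile η) (hζ : IsSandpile ζ) :
    IsSandpile (η + ζ) :=
  fun v => add_nonneg (hη v) (hζ v)

theorem IsSandpile.toppleSeq [DecidableEq V] {a : Option V → Option V → ℕ}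
    {deg : Option V → ℕ} {η : V → ℤ} {l : List V} (hη : IsSandpile η)
    (hl : LegalSeq a deg η l) : IsSandpile (toppleSeq a deg η l) := by
  induction l generalizing η with
  | nil => exact hη
  | cons v l ih =>
    refine ih (fun x => ?_) hl.2
    have hx := hη x
    have hv := hl.1
    simp only [topple]
    split_ifs with h
    · subst h; linarith
    · positivity

def IsStabilization [DecidableEq V] (a : Option V → Option V → ℕ) (deg : Option V → ℕ)
    (stab : (V → ℤ) → V → ℤ) : Prop :=
  ∀ η : V → ℤ, IsSandpile η →
    ∃ l : List V, LegalSeq a deg η l ∧ stab η = toppleSeq a deg η l ∧ StableConfig deg (stab η)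

namespace IsStabilization

variable [DecidableEq V] {a : Option V → Option V → ℕ} {deg : Option V → ℕ}
  {stab : (V → ℤ) → V → ℤ} {η x y z : V → ℤ}

theorem eq_toppleSeq (hstab : IsStabilization a deg stab) (hη : IsSandpile η) {l : List V}
    (hl : LegalSeq a deg η l) (hs : StableConfig deg (toppleSeq a deg η l)) :
    stab η = toppleSeq a deg η l := by
  obtain ⟨l₀, hl₀, he, hs₀⟩ := hstab η hη
  rw [he] at hs₀ ⊢
  exact toppleSeq_eq_of_legalSeq_of_stableConfig a deg hl₀ hs₀ hl hs

theorem isSandpile (hstab : IsStabilization a deg stab) (hη : IsSandpile η) :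
    IsSandpile (stab η) := by
  obtain ⟨l, hl, he, -⟩ := hstab η hη
  exact he ▸ hη.toppleSeq hl

theorem stableConfig (hstab : IsStabilization a deg stab) (hη : IsSandpile η) :
    StableConfig deg (stab η) :=
  (hstab η hη).choose_spec.2.2

theorem eq_self_of_stableConfig (hstab : IsStabilization a deg stab) (hη : IsSandpile η)
    (hs : StableConfig deg η) : stab η = η :=
  hstab.eq_toppleSeq hη (l := []) trivial hs

theorem one_le_deg (hstab : IsStabilization a deg stab) (v : V) : 1 ≤ (deg (some v) : ℤ) := by
  have h0 : IsSandpile (0 : V → ℤ) := fun _ => le_rfl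
  linarith [hstab.isSandpile h0 v, hstab.stableConfig h0 v]

theorem stab_add_left (hstab : IsStabilization a deg stab) (hx : IsSandpile x)
    (hy : IsSandpile y) : stab (stab x + y) = stab (x + y) := by
  obtain ⟨l, hl, hxl, -⟩ := hstab x hx
  have hseq : toppleSeq a deg (x + y) l = stab x + y := by rw [toppleSeq_add, hxl]
  obtain ⟨l', hl', hl'eq, hs'⟩ := hstab (stab x + y) ((hstab.isSandpile hx).add hy)
  have hlegal : LegalSeq a deg (x + y) (l ++ l') :=
    (hl.mono a deg (le_add_of_nonneg_right hy)).append a deg (hseq ▸ hl')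
  have hres : toppleSeq a deg (x + y) (l ++ l') = stab (stab x + y) := by
    rw [toppleSeq_append, hseq, hl'eq]
  rw [hstab.eq_toppleSeq (hx.add hy) hlegal (hres ▸ hs'), hres]

theorem stab_add_right (hstab : IsStabilization a deg stab) (hx : IsSandpile x)
    (hy : IsSandpile y) : stab (x + stab y) = stab (x + y) := by
  rw [add_comm, hstab.stab_add_left hy hx, add_comm]

theorem stab_add_assoc (hstab : IsStabilization a deg stab) (hx : IsSandpile x)
    (hy : IsSandpile y) (hz : IsSandpile z) :
    stab (stab (x + y) + z) = stab (x + stab (y + z)) := by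
  rw [hstab.stab_add_left (hx.add hy) hz, hstab.stab_add_right hx (hy.add hz), add_assoc]

end IsStabilization

/-- The identity is an idempotent of the ideal `g * M`; it exists because a finite semigroup is
compact in the discrete topology. -/
theorem exists_identity_and_inverses_of_forall_dvd {M : Type*} [CommMonoid M] [Finite M] {g : M}
    (hg : ∀ x, x ∣ g) :
    ∃ k, (∀ m, g * m * (g * k) = g * m) ∧ ∀ m, ∃ n, g * m * (g * n) = g * k := by
  let _ : TopologicalSpace M := ⊥
  have _ : DiscreteTopology M := ⟨rfl⟩
  obtain ⟨_, ⟨k, rfl⟩, hidem⟩ := exists_idempotent_in_compact_subsemigroup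
    (fun _ => continuous_of_discreteTopology) (Set.range (g * ·)) ⟨g, 1, mul_one g⟩
    (Set.toFinite _).isCompact (by
      rintro _ ⟨m, rfl⟩ _ ⟨n, rfl⟩
      exact ⟨m * (g * n), by simp only; ac_rfl⟩)
  dsimp only at hidem
  obtain ⟨c, hc⟩ := hg (g * k)
  refine ⟨k, fun m => ?_, fun m => ?_⟩
  · calc g * m * (g * k) = (g * k) * g * m := by ac_rfl
      _ = (g * k) * (g * k) * c * m := by rw [mul_assoc (g * k) (g * k), ← hc]
      _ = g * m := by rw [hidem, ← hc]
  · obtain ⟨d, hd⟩ := hg (g * m)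
    refine ⟨k * d * k, ?_⟩
    calc g * m * (g * (k * d * k)) = (g * m * d) * k * (g * k) := by ac_rfl
      _ = g * k := by rw [← hd, hidem]

abbrev StableSandpile (deg : Option V → ℕ) : Type :=
  {η : V → ℤ // IsSandpile η ∧ StableConfig deg η}

instance [Finite V] (deg : Option V → ℕ) : Finite (StableSandpile deg) :=
  Set.Finite.to_subtype <| (Set.Finite.pi' fun v => Set.finite_Ico 0 (deg (some v) : ℤ)).subset
    fun _ hη v => ⟨hη.1 v, hη.2 v⟩

@[reducible]
def IsStabilization.commMonoid [DecidableEq V] {a : Option V → Option V → ℕ}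
    {deg : Option V → ℕ} {stab : (V → ℤ) → V → ℤ} (hstab : IsStabilization a deg stab) :
    CommMonoid (StableSandpile deg) where
  mul x y :=
    ⟨stab (x.1 + y.1), hstab.isSandpile (x.2.1.add y.2.1), hstab.stableConfig (x.2.1.add y.2.1)⟩
  one := ⟨0, fun _ => le_rfl, fun v => hstab.one_le_deg v⟩
  mul_assoc x y z := Subtype.ext (hstab.stab_add_assoc x.2.1 y.2.1 z.2.1)
  one_mul x := Subtype.ext <| (congrArg stab (zero_add x.1)).trans
    (hstab.eq_self_of_stableConfig x.2.1 x.2.2)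
  mul_one x := Subtype.ext <| (congrArg stab (add_zero x.1)).trans
    (hstab.eq_self_of_stableConfig x.2.1 x.2.2)
  mul_comm x y := Subtype.ext <| congrArg stab (add_comm x.1 y.1)

def maxStable (deg : Option V → ℕ) : V → ℤ := fun v => (deg (some v) : ℤ) - 1

theorem stableConfig_maxStable (deg : Option V → ℕ) : StableConfig deg (maxStable (V := V) deg) :=
  fun v => by simp [maxStable]

def recurrentConfigs (deg : Option V → ℕ) (stab : (V → ℤ) → V → ℤ) : Set (V → ℤ) :=
  {η | IsSandpile η ∧ ∃ ζ : V → ℤ, IsSandpile ζ ∧ η = stab (maxStable deg + ζ)}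

namespace IsStabilization

variable [DecidableEq V] {a : Option V → Option V → ℕ} {deg : Option V → ℕ}
  {stab : (V → ℤ) → V → ℤ}

theorem isSandpile_maxStable (hstab : IsStabilization a deg stab) : IsSandpile (maxStable deg) :=
  fun v => by simp only [maxStable]; linarith [hstab.one_le_deg v]

theorem stab_add_mem_recurrentConfigs (hstab : IsStabilization a deg stab) {η β : V → ℤ}
    (hη : η ∈ recurrentConfigs deg stab) (hβ : IsSandpile β) :
    stab (η + β) ∈ recurrentConfigs deg stab := by
  obtain ⟨hηs, ζ, hζ, rfl⟩ := hη
  have hmax := hstab.isSandpile_maxStable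
  refine ⟨hstab.isSandpile (hηs.add hβ), ζ + β, hζ.add hβ, ?_⟩
  rw [hstab.stab_add_left (hmax.add hζ) hβ, add_assoc]

theorem exists_identity_and_inverses [Finite V] (hstab : IsStabilization a deg stab) :
    ∃ ε ∈ recurrentConfigs deg stab, (∀ η ∈ recurrentConfigs deg stab, stab (η + ε) = η) ∧
      ∀ η ∈ recurrentConfigs deg stab, ∃ ζ ∈ recurrentConfigs deg stab, stab (η + ζ) = ε := by
  let _ := hstab.commMonoid
  have hmax := hstab.isSandpile_maxStable
  let g : StableSandpile deg := ⟨maxStable deg, hmax, stableConfig_maxStable deg⟩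
  have hdvd (x : StableSandpile deg) : x ∣ g := by
    refine ⟨⟨maxStable deg - x.1, fun v => ?_, fun v => ?_⟩, Subtype.ext ?_⟩
    · simp only [maxStable, Pi.sub_apply]; linarith [x.2.2 v]
    · simp only [maxStable, Pi.sub_apply]; linarith [x.2.1 v]
    · change maxStable deg = stab (x.1 + (maxStable deg - x.1))
      rw [add_sub_cancel, hstab.eq_self_of_stableConfig hmax g.2.2]
  have hmem (m : StableSandpile deg) : (g * m).1 ∈ recurrentConfigs deg stab :=
    ⟨(g * m).2.1, m.1, m.2.1, rfl⟩
  have hgen {η} (hη : η ∈ recurrentConfigs deg stab) : ∃ m : StableSandpile deg, (g * m).1 = η := by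
    obtain ⟨-, ζ, hζ, rfl⟩ := hη
    exact ⟨⟨stab ζ, hstab.isSandpile hζ, hstab.stableConfig hζ⟩,
      hstab.stab_add_right hmax hζ⟩
  obtain ⟨k, hidentity, hinverse⟩ := exists_identity_and_inverses_of_forall_dvd hdvd
  refine ⟨(g * k).1, hmem k, fun η hη => ?_, fun η hη => ?_⟩
  · obtain ⟨m, rfl⟩ := hgen hη
    exact congrArg Subtype.val (hidentity m)
  · obtain ⟨m, rfl⟩ := hgen hη
    obtain ⟨n, hn⟩ := hinverse m
    exact ⟨(g * n).1, hmem n, congrArg Subtype.val hn⟩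

end IsStabilization

theorem stmt_14_general (V : Type) [Fintype V] [DecidableEq V]
    (a : Option V → Option V → ℕ)
    (deg : Option V → ℕ)
    (stab : (V → ℤ) → V → ℤ)
    (hstab : ∀ η : V → ℤ, IsSandpile η →
      ∃ l : List V, LegalSeq a deg η l ∧ stab η = toppleSeq a deg η l ∧
        StableConfig deg (stab η))
    -- the maximal stable configuration `η_max v = deg v - 1`:
    (ηmax : V → ℤ) (hηmax : ∀ v, ηmax v = (deg (some v) : ℤ) - 1)
    -- the set of recurrent configurations:
    (R : Set (V → ℤ))
    (hR : R = {η | IsSandpile η ∧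
      ∃ ζ : V → ℤ, IsSandpile ζ ∧ η = stab (ηmax + ζ)}) :
    -- closure of `⊕`:
    (∀ η ∈ R, ∀ ζ ∈ R, stab (η + ζ) ∈ R) ∧
    -- associativity:
    (∀ η ∈ R, ∀ ζ ∈ R, ∀ ξ ∈ R,
      stab (stab (η + ζ) + ξ) = stab (η + stab (ζ + ξ))) ∧
    -- commutativity:
    (∀ η ∈ R, ∀ ζ ∈ R, stab (η + ζ) = stab (ζ + η)) ∧
    -- identity element and inverses:
    (∃ ε ∈ R, (∀ η ∈ R, stab (η + ε) = η) ∧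
      ∀ η ∈ R, ∃ ζ ∈ R, stab (η + ζ) = ε) := by
  have hstab : IsStabilization a deg stab := hstab
  obtain rfl : ηmax = maxStable deg := funext hηmax
  subst hR
  refine ⟨fun η hη ζ hζ => hstab.stab_add_mem_recurrentConfigs hη hζ.1,
    fun η hη ζ hζ ξ hξ => hstab.stab_add_assoc hη.1 hζ.1 hξ.1,
    fun η _ ζ _ => by rw [add_comm], hstab.exists_identity_and_inverses⟩

/-- `stmt_14`: the set of recurrent configurations with the operation
`η ⊕ ζ = (η + ζ)°` is a commutative monoid, in fact an abelian group.
Here `stab` is the stabilization map `η ↦ η°` (well defined by the abelian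
property), hypothesized through its defining property. -/
theorem stmt_14 (V : Type) [Fintype V] [DecidableEq V]
    (a : Option V → Option V → ℕ)
    (hsymm : ∀ p q, a p q = a q p) (hloop : ∀ p, a p p = 0)
    (hconn : ∀ p q : Option V, Relation.ReflTransGen (fun p q => 0 < a p q) p q)
    (deg : Option V → ℕ) (hdeg : ∀ p, deg p = ∑ q : Option V, a p q)
    (stab : (V → ℤ) → V → ℤ)
    (hstab : ∀ η : V → ℤ, IsSandpile η →
      ∃ l : List V, LegalSeq a deg η l ∧ stab η = toppleSeq a deg η l ∧
        StableConfig deg (stab η))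
    -- the maximal stable configuration `η_max v = deg v - 1`:
    (ηmax : V → ℤ) (hηmax : ∀ v, ηmax v = (deg (some v) : ℤ) - 1)
    -- the set of recurrent configurations:
    (R : Set (V → ℤ))
    (hR : R = {η | IsSandpile η ∧
      ∃ ζ : V → ℤ, IsSandpile ζ ∧ η = stab (ηmax + ζ)}) :
    -- closure of `⊕`:
    (∀ η ∈ R, ∀ ζ ∈ R, stab (η + ζ) ∈ R) ∧
    -- associativity:
    (∀ η ∈ R, ∀ ζ ∈ R, ∀ ξ ∈ R,
      stab (stab (η + ζ) + ξ) = stab (η + stab (ζ + ξ))) ∧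
    -- commutativity:
    (∀ η ∈ R, ∀ ζ ∈ R, stab (η + ζ) = stab (ζ + η)) ∧
    -- identity element and inverses:
    (∃ ε ∈ R, (∀ η ∈ R, stab (η + ε) = η) ∧
      ∀ η ∈ R, ∃ ζ ∈ R, stab (η + ζ) = ε) :=
  stmt_14_general V a deg stab hstab ηmax hηmax R hR
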